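/- arXiv:2203.12070 — 2 statements merged into one kernel-verified Lean document; each statement's English description precedes it below -/
import Mathlib

section
/- Let V, H, K be Hilbert spaces with compact inclusion i : V → H and compact linear j : V → K, and 𝔞 : V × V → ℂ a positive symmetric continuous i-elliptic sesquilinear form with V_D = ker j. Assume the self-adjoint operator A^N associated with 𝔞 has no eigenvector in V_D. For μ, λ ∈ ℝ let A_μ be the self-adjoint graph associated with (𝔞_μ, i), where 𝔞_μ(u,v) = 𝔞(u,v) − μ(j(u), j(v))_K, and let N_λ be the self-adjoint graph associated with (𝔟_λ, j), where 𝔟_λ(u,v) = 𝔞(u,v) − λ(u,v)_H. Then λ ∈ σ(A_μ) if and only if μ ∈ σ(N_λ). -/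
/-!
Abstract framework for forms, graphs (linear relations) and their spectra,
following Arendt--ter Elst style form methods.
-/

noncomputable section
open Complex Filter Topology ComplexConjugate

local notation "⟪" x ", " y "⟫" => @inner ℂ _ _ x y

section Defs

variable {V K H W : Type*}
variable [NormedAddCommGroup V] [InnerProductSpace ℂ V]
variable [NormedAddCommGroup K] [InnerProductSpace ℂ K]
variable [NormedAddCommGroup H] [InnerProductSpace ℂ H]

/-- The form `a` is sesquilinear: linear in the first argument and conjugate-linear in the
second argument. -/
def IsSesqui (a : V → V → ℂ) : Prop :=
  (∀ u₁ u₂ v, a (u₁ + u₂) v = a u₁ v + a u₂ v) ∧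
  (∀ u v₁ v₂, a u (v₁ + v₂) = a u v₁ + a u v₂) ∧
  (∀ (c : ℂ) u v, a (c • u) v = c * a u v) ∧
  (∀ (c : ℂ) u v, a u (c • v) = conj c * a u v)

/-- The form `a` is continuous (bounded): `|a u v| ≤ M ‖u‖ ‖v‖`. -/
def IsContinuousForm (a : V → V → ℂ) : Prop :=
  ∃ M : ℝ, 0 < M ∧ ∀ u v, ‖a u v‖ ≤ M * ‖u‖ * ‖v‖

/-- The form `a` is symmetric: `a v u = conj (a u v)`. -/
def IsSymmForm (a : V → V → ℂ) : Prop := ∀ u v, a v u = conj (a u v)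

/-- The form `a` is positive: `a u u ≥ 0` (in particular real) for all `u`. -/
def IsPositiveForm (a : V → V → ℂ) : Prop := ∀ u, 0 ≤ (a u u).re ∧ (a u u).im = 0

/-- The form `a` is `j`-elliptic: `Re (a u u) + ω ‖j u‖² ≥ μ ‖u‖²` with `ω, μ > 0`. -/
def IsElliptic [NormedAddCommGroup W] (a : V → V → ℂ) (j : V → W) : Prop :=
  ∃ ω μ : ℝ, 0 < ω ∧ 0 < μ ∧ ∀ u, μ * ‖u‖ ^ 2 ≤ (a u u).re + ω * ‖j u‖ ^ 2

/-- The graph associated with `(a, j)`: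
`{(j u, f) : u ∈ V, a u v = (f, j v)_K for all v ∈ V}`.  Here `(f, g)_K` denotes the inner
product which is linear in `f`, i.e. `(f, g)_K = ⟪g, f⟫` in Mathlib's convention. -/
def GraphOf (a : V → V → ℂ) (j : V →L[ℂ] K) : Set (K × K) :=
  {p | ∃ u : V, p.1 = j u ∧ ∀ v : V, a u v = ⟪j v, p.2⟫}

/-- The graph associated with `(a|_{W×W}, j|_W)` for a subspace (set) `W ⊆ V`. -/
def GraphOfOn (a : V → V → ℂ) (j : V →L[ℂ] K) (W : Set V) : Set (K × K) :=
  {p | ∃ u ∈ W, p.1 = j u ∧ ∀ v ∈ W, a u v = ⟪j v, p.2⟫}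

/-- The (graph of the) self-adjoint *operator* associated with the form `a|_{W×W}` in the
closure of `i(W)` in `H`:  `u ∈ D(A)` and `A u = f` iff `u ∈ W`, `f ∈ closure (i '' W)` and
`a u v = (f, v)_H` for all `v ∈ W`. -/
def OpGraphOf (a : V → V → ℂ) (i : V →L[ℂ] H) (W : Set V) : Set (H × H) :=
  {p | ∃ u ∈ W, p.1 = i u ∧ p.2 ∈ closure (i '' W) ∧ ∀ v ∈ W, a u v = ⟪i v, p.2⟫}

/-- The adjoint of a graph (linear relation) `A ⊆ K × K`. -/
def AdjointGraph (A : Set (K × K)) : Set (K × K) :=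
  {q | ∀ p ∈ A, ⟪q.1, p.2⟫ = ⟪q.2, p.1⟫}

/-- A graph is self-adjoint if it coincides with its adjoint. -/
def IsSelfAdjointGraph (A : Set (K × K)) : Prop := AdjointGraph A = A

/-- A graph is lower bounded if `(f, x)_K ≥ c ‖x‖²` for all `(x, f)` in the graph. -/
def IsLowerBoundedGraph (A : Set (K × K)) : Prop :=
  ∃ c : ℝ, ∀ p ∈ A, c * ‖p.1‖ ^ 2 ≤ (⟪p.1, p.2⟫).re

/-- A graph has compact resolvent: `(λ I + A)⁻¹` is a compact (everywhere defined, bounded)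
operator for all large real `λ`. -/
def HasCompactResolventGraph (A : Set (K × K)) : Prop :=
  ∃ lam₀ : ℝ, ∀ lam : ℝ, lam₀ ≤ lam → ∃ R : K →L[ℂ] K, IsCompactOperator ⇑R ∧
    (∀ p ∈ A, R ((lam : ℂ) • p.1 + p.2) = p.1) ∧
    (∀ y : K, ∃ p ∈ A, (lam : ℂ) • p.1 + p.2 = y)

/-- The resolvent set of a graph: those `z` for which `(A - z)⁻¹` is an everywhere defined
bounded operator. -/
def GraphResolventSet (A : Set (K × K)) : Set ℂ :=
  {z | ∃ R : K →L[ℂ] K, (∀ p ∈ A, R (p.2 - z • p.1) = p.1) ∧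
        ∀ y : K, ∃ p ∈ A, p.2 - z • p.1 = y}

/-- The spectrum of a graph. -/
def GraphSpectrum (A : Set (K × K)) : Set ℂ := (GraphResolventSet A)ᶜ

/-- `t` is an eigenvalue of the graph `A`. -/
def IsEigenvalueG (A : Set (K × K)) (t : ℂ) : Prop := ∃ x : K, x ≠ 0 ∧ (x, t • x) ∈ A

/-- The spectrum of the graph is discrete: it consists of isolated eigenvalues. -/
def HasDiscreteSpectrumGraph (A : Set (K × K)) : Prop :=
  ∀ z ∈ GraphSpectrum A, IsEigenvalueG A z ∧
    ∃ ε : ℝ, 0 < ε ∧ ∀ w ∈ GraphSpectrum A, w ≠ z → ε ≤ ‖w - z‖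

/-- The multiplicity of `t` as an eigenvalue of the graph `A`: the dimension of the eigenspace
`{x : (x, t x) ∈ A}` (for a graph this set is a subspace of `K`, hence equals its span). -/
def eigMult (A : Set (K × K)) (t : ℝ) : ℕ :=
  Module.finrank ℂ ↥(Submodule.span ℂ {x : K | (x, (t : ℂ) • x) ∈ A})

/-- `lam` is the sequence of eigenvalues of the graph `A`, listed in increasing order and
repeated with multiplicity. -/
def IsEigSeq (A : Set (K × K)) (lam : ℕ → ℝ) : Prop :=
  Monotone lam ∧ (∀ t : ℝ, {n : ℕ | lam n = t}.Finite) ∧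
    ∀ t : ℝ, Nat.card {n : ℕ | lam n = t} = eigMult A t

/-- The multivalued part of a graph. -/
def mulPartG (A : Set (K × K)) : Set K := {f | ((0 : K), f) ∈ A}

/-- The single-valued part of a graph: the pairs whose second component is orthogonal to the
multivalued part. -/
def SingleValuedPartG (A : Set (K × K)) : Set (K × K) :=
  {p | p ∈ A ∧ ∀ m ∈ mulPartG A, ⟪m, p.2⟫ = 0}

/-- The span of `{φ ∈ D(N) : (N° φ, φ)_K = 0}` is infinite dimensional, where `N°` is the
single-valued part of the graph `N`. -/
def InfiniteNullSpan (N : Set (K × K)) : Prop :=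
  ¬ Module.Finite ℂ
      ↥(Submodule.span ℂ {φ : K | ∃ f : K, (φ, f) ∈ SingleValuedPartG N ∧ ⟪φ, f⟫ = 0})

/-- `R` is the resolvent `(I + A)⁻¹` of the graph `A`. -/
def IsResolventAtOne (A : Set (K × K)) (R : K →L[ℂ] K) : Prop :=
  (∀ p ∈ A, R (p.1 + p.2) = p.1) ∧ ∀ y : K, ∃ p ∈ A, p.1 + p.2 = y

end Defs


/-! Both conditions are equivalent to the invertibility of the operator `T` on `V` representing
the form `a - λ (i ·, i ·) - μ (j ·, j ·)`. Since `T` is a coercive operator minus a compact one,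
the Fredholm alternative makes it invertible as soon as it is injective. If `T` is invertible,
`i T⁻¹ i†` and `j T⁻¹ j†` are the resolvents of `A_μ` at `λ` and of `N_λ` at `μ`. Conversely, a
vector `u` in the kernel of `T` yields the eigenpairs `(i u, λ i u)` of `A_μ` and `(j u, μ j u)` of
`N_λ`. In the first case `i u = 0`, so `u = 0` since `i` is injective. In the second `j u = 0`,
so `u ∈ V_D` is an eigenvector of `A^N` unless `u = 0`. -/

open scoped InnerProduct

section Operators

variable {𝕜 X : Type*} [RCLike 𝕜] [NormedAddCommGroup X] [InnerProductSpace 𝕜 X] [CompleteSpace X]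

theorem ContinuousLinearMap.isUnit_of_coercive {E : X →L[𝕜] X} {c : ℝ} (hc : 0 < c)
    (hE : ∀ x, c * ‖x‖ ^ 2 ≤ RCLike.re (inner 𝕜 x (E x))) : IsUnit E := by
  refine E.isUnit_of_forall_le_norm_inner_map (c := ⟨c, hc.le⟩) hc fun x => ?_
  calc ‖x‖ ^ 2 * c = c * ‖x‖ ^ 2 := mul_comm _ _
    _ ≤ RCLike.re (inner 𝕜 x (E x)) := hE x
    _ ≤ ‖inner 𝕜 x (E x)‖ := RCLike.re_le_norm _
    _ = ‖inner 𝕜 (E x) x‖ := by rw [← inner_conj_symm, RCLike.norm_conj]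

end Operators

section Fredholm

variable {𝕜 X : Type*} [NontriviallyNormedField 𝕜] [NormedAddCommGroup X] [NormedSpace 𝕜 X]
  [CompleteSpace X]

theorem ContinuousLinearMap.isUnit_sub_of_isCompactOperator_of_injective {E C : X →L[𝕜] X}
    (hE : IsUnit E) (hC : IsCompactOperator C) (hinj : Function.Injective (E - C)) :
    IsUnit (E - C) := by
  set D : X →L[𝕜] X := ↑hE.unit⁻¹ * C
  have hED : E * D = C := by simp [D, ← mul_assoc]
  have hD : IsCompactOperator D := hC.clm_comp _
  have hnot : ¬ Module.End.HasEigenvalue (D : Module.End 𝕜 X) 1 := by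
    rw [Module.End.hasEigenvalue_iff, not_not, Submodule.eq_bot_iff]
    intro x hx
    rw [Module.End.mem_eigenspace_iff, one_smul] at hx
    refine hinj ?_
    have : C x = E x := by rw [← hED]; exact congrArg E hx
    simp [this]
  have hunit : IsUnit (1 - D) := by
    simpa [spectrum.mem_resolventSet_iff] using
      (hD.hasEigenvalue_or_mem_resolventSet one_ne_zero).resolve_left hnot
  have : E - C = E * (1 - D) := by rw [mul_sub, mul_one, hED]
  rw [this]
  exact hE.mul hunit

end Fredholm

section Graphs

variable {V K : Type*} [NormedAddCommGroup V] [InnerProductSpace ℂ V]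
  [NormedAddCommGroup K] [InnerProductSpace ℂ K]

theorem IsSesqui.exists_inner_eq [CompleteSpace V] {a : V → V → ℂ} (hsesq : IsSesqui a)
    (hcont : IsContinuousForm a) : ∃ A : V →L[ℂ] V, ∀ u v, ⟪v, A u⟫ = a u v := by
  obtain ⟨add_left, add_right, smul_left, smul_right⟩ := hsesq
  obtain ⟨M, -, hM⟩ := hcont
  let B : V →L⋆[ℂ] V →L[ℂ] ℂ := LinearMap.mkContinuous₂
    (LinearMap.mk₂'ₛₗ (starRingEnd ℂ) (RingHom.id ℂ) (fun u v => conj (a u v))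
      (fun _ _ _ => by simp [add_left]) (fun _ _ _ => by simp [smul_left])
      (fun _ _ _ => by simp [add_right]) (fun _ _ _ => by simp [smul_right]))
    M (fun u v => by simpa using hM u v)
  refine ⟨InnerProductSpace.continuousLinearMapOfBilin B, fun u v => ?_⟩
  rw [← inner_conj_symm, InnerProductSpace.continuousLinearMapOfBilin_apply]
  simp [B]

theorem graphOfOn_univ (b : V → V → ℂ) (k : V →L[ℂ] K) :
    GraphOfOn b k Set.univ = GraphOf b k := by
  ext p
  simp [GraphOfOn, GraphOf]

theorem eq_zero_of_mem_graphResolventSet {A : Set (K × K)} {z : ℂ}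
    (hz : z ∈ GraphResolventSet A) {x : K} (hx : (x, z • x) ∈ A) : x = 0 := by
  obtain ⟨R, hR, -⟩ := hz
  simpa using (hR _ hx).symm

variable [CompleteSpace V] [CompleteSpace K] {b : V → V → ℂ} {k : V →L[ℂ] K} {z : ℂ}
  {T : V →L[ℂ] V}

theorem forall_form_eq_inner_iff (hT : ∀ u v, ⟪v, T u⟫ = b u v - z * ⟪k v, k u⟫)
    (u : V) (f : K) :
    (∀ v, b u v = ⟪k v, f⟫) ↔ T u = (k†) (f - z • k u) := by
  have key : ∀ v, ⟪v, (k†) (f - z • k u)⟫ = ⟪k v, f⟫ - z * ⟪k v, k u⟫ := fun v => by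
    rw [ContinuousLinearMap.adjoint_inner_right, inner_sub_right, inner_smul_right]
  constructor
  · exact fun h => ext_inner_left ℂ fun v => by rw [hT, key, h]
  · intro h v
    have := congrArg (⟪v, ·⟫) h
    rw [hT, key] at this
    exact sub_left_inj.mp this

theorem mem_graphResolventSet_of_isUnit (hT : ∀ u v, ⟪v, T u⟫ = b u v - z * ⟪k v, k u⟫)
    (hunit : IsUnit T) : z ∈ GraphResolventSet (GraphOf b k) := by
  obtain ⟨S, rfl⟩ := hunit
  have inv_apply : ∀ x, (↑S⁻¹ : V →L[ℂ] V) ((S : V →L[ℂ] V) x) = x :=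
    DFunLike.congr_fun S.inv_mul
  have apply_inv : ∀ x, (S : V →L[ℂ] V) ((↑S⁻¹ : V →L[ℂ] V) x) = x :=
    DFunLike.congr_fun S.mul_inv
  refine ⟨k ∘L ↑S⁻¹ ∘L (k†), ?_, fun y => ?_⟩
  · rintro ⟨-, f⟩ ⟨u, rfl, hu⟩
    rw [forall_form_eq_inner_iff hT] at hu
    simp [← hu, inv_apply]
  · set u := (↑S⁻¹ : V →L[ℂ] V) ((k†) y)
    refine ⟨(k u, y + z • k u), ⟨u, rfl, ?_⟩, by simp⟩
    rw [forall_form_eq_inner_iff hT]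
    simp [u, apply_inv]

theorem map_eq_zero_of_mem_graphResolventSet (hT : ∀ u v, ⟪v, T u⟫ = b u v - z * ⟪k v, k u⟫)
    (hz : z ∈ GraphResolventSet (GraphOf b k)) {u : V} (hu : T u = 0) : k u = 0 :=
  eq_zero_of_mem_graphResolventSet hz
    ⟨u, rfl, (forall_form_eq_inner_iff hT u _).2 (by simpa using hu)⟩

end Graphs

theorem statement4_general
    {V H K : Type*}
    [NormedAddCommGroup V] [InnerProductSpace ℂ V] [CompleteSpace V]
    [NormedAddCommGroup H] [InnerProductSpace ℂ H] [CompleteSpace H]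
    [NormedAddCommGroup K] [InnerProductSpace ℂ K] [CompleteSpace K]
    (i : V →L[ℂ] H) (hinj : Function.Injective ⇑i) (hicpt : IsCompactOperator ⇑i)
    (j : V →L[ℂ] K) (hjcpt : IsCompactOperator ⇑j)
    (a : V → V → ℂ)
    (hsesq : IsSesqui a)
    (hcont : IsContinuousForm a) (hell : IsElliptic a ⇑i)
    (hI : ∀ (u : V) (t : ℂ), j u = 0 → (i u, t • i u) ∈ OpGraphOf a i Set.univ → u = 0)
    (lam μ : ℝ) :
    (lam : ℂ) ∈ GraphSpectrum
        (GraphOfOn (fun u v => a u v - (μ : ℂ) * @inner ℂ _ _ (j v) (j u)) i Set.univ) ↔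
      (μ : ℂ) ∈ GraphSpectrum
        (GraphOf (fun u v => a u v - (lam : ℂ) * @inner ℂ _ _ (i v) (i u)) j) := by
  obtain ⟨ω, c, -, hc, hell⟩ := hell
  obtain ⟨A, hA⟩ := hsesq.exists_inner_eq hcont
  set Gi : V →L[ℂ] V := (i†) ∘L i
  set Gj : V →L[ℂ] V := (j†) ∘L j
  have hGi : ∀ u v, ⟪v, Gi u⟫ = ⟪i v, i u⟫ := fun u v => i.adjoint_inner_right v (i u)
  have hGj : ∀ u v, ⟪v, Gj u⟫ = ⟪j v, j u⟫ := fun u v => j.adjoint_inner_right v (j u)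
  set T : V →L[ℂ] V := (A + (ω : ℂ) • Gi) - (((lam : ℂ) + ω) • Gi + (μ : ℂ) • Gj)
  have hTi : ∀ u v, ⟪v, T u⟫ = (a u v - μ * ⟪j v, j u⟫) - lam * ⟪i v, i u⟫ := fun u v => by
    simp only [T, sub_apply, add_apply, smul_apply, inner_sub_right, inner_add_right,
      inner_smul_right, hA, hGi, hGj]
    ring
  have hTj : ∀ u v, ⟪v, T u⟫ = (a u v - lam * ⟪i v, i u⟫) - μ * ⟪j v, j u⟫ := fun u v => by
    rw [hTi]; ring
  have hunit : Function.Injective T → IsUnit T := by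
    refine ContinuousLinearMap.isUnit_sub_of_isCompactOperator_of_injective
      (ContinuousLinearMap.isUnit_of_coercive hc fun x => ?_) ?_
    · have hnorm : (⟪i x, i x⟫).re = ‖i x‖ ^ 2 := inner_self_eq_norm_sq (𝕜 := ℂ) (i x)
      show c * ‖x‖ ^ 2 ≤ (⟪x, (A + (ω : ℂ) • Gi) x⟫).re
      rw [add_apply, smul_apply, inner_add_right, inner_smul_right, hA, hGi, Complex.add_re,
        Complex.re_ofReal_mul, hnorm]
      exact hell x
    · exact ((hicpt.clm_comp (i†)).smul _).add ((hjcpt.clm_comp (j†)).smul _)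
  have hA_mem : (lam : ℂ) ∈ GraphResolventSet
      (GraphOfOn (fun u v => a u v - (μ : ℂ) * ⟪j v, j u⟫) i Set.univ) ↔ IsUnit T := by
    rw [graphOfOn_univ]
    refine ⟨fun h => hunit ?_, mem_graphResolventSet_of_isUnit hTi⟩
    refine (injective_iff_map_eq_zero T).2 fun u hu => hinj ?_
    simpa using map_eq_zero_of_mem_graphResolventSet hTi h hu
  have hN_mem : (μ : ℂ) ∈ GraphResolventSet
      (GraphOf (fun u v => a u v - (lam : ℂ) * ⟪i v, i u⟫) j) ↔ IsUnit T := by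
    refine ⟨fun h => hunit ?_, mem_graphResolventSet_of_isUnit hTj⟩
    refine (injective_iff_map_eq_zero T).2 fun u hu => ?_
    have hju := map_eq_zero_of_mem_graphResolventSet hTj h hu
    refine hI u lam hju ⟨u, trivial, rfl, subset_closure ⟨(lam : ℂ) • u, trivial, map_smul ..⟩,
      fun v _ => ?_⟩
    have := hTj u v
    rw [hu, hju] at this
    rw [inner_smul_right]
    simpa [sub_eq_zero] using this.symm
  simp only [GraphSpectrum, Set.mem_compl_iff, hA_mem, hN_mem]

/-- Lemma 2.5, a Birman--Schwinger principle.
With `V`, `H`, `K` Hilbert spaces, `i : V → H` a compact injective embedding, `j : V → K`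
compact, `a` a positive symmetric continuous `i`-elliptic form with `V_D = ker j`, and
assuming that the self-adjoint operator `A^N` associated with `a` has no eigenvector in
`V_D`:  for `λ, μ ∈ ℝ` one has `λ ∈ σ(A_μ)` if and only if `μ ∈ σ(N_λ)`, where `A_μ` is
the self-adjoint graph associated with `(a_μ, i)`, `a_μ(u,v) = a(u,v) - μ (j u, j v)_K`,
and `N_λ` is the self-adjoint graph associated with `(b_λ, j)`,
`b_λ(u,v) = a(u,v) - λ (u,v)_H`. -/
theorem statement4
    {V H K : Type*}
    [NormedAddCommGroup V] [InnerProductSpace ℂ V] [CompleteSpace V]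
    [NormedAddCommGroup H] [InnerProductSpace ℂ H] [CompleteSpace H]
    [NormedAddCommGroup K] [InnerProductSpace ℂ K] [CompleteSpace K]
    (i : V →L[ℂ] H) (hinj : Function.Injective ⇑i) (hicpt : IsCompactOperator ⇑i)
    (j : V →L[ℂ] K) (hjcpt : IsCompactOperator ⇑j)
    (a : V → V → ℂ)
    (hsesq : IsSesqui a) (hpos : IsPositiveForm a) (hsymm : IsSymmForm a)
    (hcont : IsContinuousForm a) (hell : IsElliptic a ⇑i)
    (hI : ∀ (u : V) (t : ℂ), j u = 0 → (i u, t • i u) ∈ OpGraphOf a i Set.univ → u = 0)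
    (lam μ : ℝ) :
    (lam : ℂ) ∈ GraphSpectrum
        (GraphOfOn (fun u v => a u v - (μ : ℂ) * @inner ℂ _ _ (j v) (j u)) i Set.univ) ↔
      (μ : ℂ) ∈ GraphSpectrum
        (GraphOf (fun u v => a u v - (lam : ℂ) * @inner ℂ _ _ (i v) (i u)) j) :=
  statement4_general i hinj hicpt j hjcpt a hsesq hcont hell hI lam μ
end
end

section
/- Let V, H, K be Hilbert spaces with compact inclusion i : V → H and compact linear j : V → K, and 𝔞 : V × V → ℂ a positive symmetric continuous i-elliptic sesquilinear form. For λ ∈ ℝ let N_λ be the self-adjoint graph associated with (𝔟_λ, j), where 𝔟_λ(u,v) = 𝔞(u,v) − λ(u,v)_H, and let N_λ° be its single-valued part. Let λ > 0 and assume that the span of {φ ∈ D(N_λ) : (N_λ° φ, φ)_K = 0} is infinite-dimensional. Then σ(N_λ) ∩ (−∞, 0) ≠ ∅. -/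
/-!
Abstract framework for forms, graphs (linear relations) and their spectra,
following Arendt--ter Elst style form methods.
-/

noncomputable section
open Complex Filter Topology ComplexConjugate

local notation "⟪" x ", " y "⟫" => @inner ℂ _ _ x y

/-!
If no negative number lies in `σ(N_λ)`, then the resolvent `R = (1 + N_λ)⁻¹` is a self-adjoint
operator with spectrum in `[0, 1]`, so `R - R²` is a positive operator. For `(φ, f) ∈ N_λ` and
`y = φ + f` one computes `⟪y, (R - R²) y⟫ = ⟪f, φ⟫`; hence for a null vector `φ` we get
`(R - R²) y = 0`, i.e. `R φ = φ`, i.e. `(φ, 0) ∈ N_λ`. So every null vector lies in `j(Z)`, where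
`Z = {u : 𝔟_λ(u, ·) = 0}`. On `Z` we have `𝔞(u, u) = λ ‖i u‖²`, so ellipticity gives
`‖u‖ ≤ C ‖i u‖`, and compactness of `i` forces `Z` to be finite dimensional.
-/

open scoped NNReal

theorem Submodule.finiteDimensional_of_isCompactOperator_of_norm_le
    {𝕜 E F : Type*} [NontriviallyNormedField 𝕜] [CompleteSpace 𝕜]
    [NormedAddCommGroup E] [NormedSpace 𝕜 E] [NormedAddCommGroup F] [NormedSpace 𝕜 F]
    {T : E →L[𝕜] F} (hT : IsCompactOperator T) (Z : Submodule 𝕜 E) {C : ℝ≥0}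
    (hC : ∀ u ∈ Z, ‖u‖ ≤ C * ‖T u‖) : FiniteDimensional 𝕜 Z := by
  set f : Z →L[𝕜] F := T.comp Z.subtypeL
  have hf : IsUniformInducing f :=
    (f.antilipschitz_of_bound fun u => hC u u.2).isUniformInducing f.uniformContinuous
  have hball : TotallyBounded (closure (T '' Metric.closedBall 0 1)) :=
    (hT.isCompact_closure_image_of_bounded Metric.isBounded_closedBall).totallyBounded
  have hsub : Metric.closedBall (0 : Z) 1 ⊆ f ⁻¹' closure (T '' Metric.closedBall 0 1) :=
    fun u hu => subset_closure ⟨u, by simpa using hu, rfl⟩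
  exact .of_totallyBounded_nhds_zero 𝕜 (Metric.closedBall_mem_nhds 0 one_pos)
    ((totallyBounded_preimage hf hball).subset hsub)

section Graphs

open ContinuousLinearMap

variable {K : Type*} [NormedAddCommGroup K] [InnerProductSpace ℂ K]

theorem ContinuousLinearMap.apply_eq_zero_of_nonneg_of_inner_eq_zero [CompleteSpace K]
    {P : K →L[ℂ] K} (hP : 0 ≤ P) {y : K} (hy : ⟪y, P y⟫ = 0) : P y = 0 := by
  obtain ⟨S, rfl⟩ := CStarAlgebra.nonneg_iff_eq_star_mul_self.mp hP
  have hSy : S y = 0 := by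
    rw [mul_apply_eq_comp, star_eq_adjoint, adjoint_inner_right] at hy
    exact inner_self_eq_zero.mp hy
  rw [mul_apply_eq_comp, hSy, map_zero]

theorem IsResolventAtOne.exists_mem {A : Set (K × K)} {R : K →L[ℂ] K}
    (hR : IsResolventAtOne A R) (y : K) : ∃ p ∈ A, p.1 + p.2 = y ∧ R y = p.1 := by
  obtain ⟨p, hp, rfl⟩ := hR.2 y
  exact ⟨p, hp, rfl, hR.1 p hp⟩

theorem exists_isResolventAtOne_of_neg_one_mem {A : Set (K × K)} (h : (-1 : ℂ) ∈ GraphResolventSet A) :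
    ∃ R, IsResolventAtOne A R := by
  obtain ⟨R, hR, hsurj⟩ := h
  refine ⟨R, fun p hp => ?_, fun y => ?_⟩
  · simpa [add_comm] using hR p hp
  · obtain ⟨p, hp, rfl⟩ := hsurj y
    exact ⟨p, hp, by simp [add_comm]⟩

theorem IsResolventAtOne.isSelfAdjoint [CompleteSpace K] {A : Set (K × K)} {R : K →L[ℂ] K}
    (hA : A ⊆ AdjointGraph A) (hR : IsResolventAtOne A R) : IsSelfAdjoint R := by
  refine isSelfAdjoint_iff_isSymmetric.mpr fun x y => ?_
  obtain ⟨p, hp, rfl, hRx⟩ := hR.exists_mem x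
  obtain ⟨q, hq, rfl, hRy⟩ := hR.exists_mem y
  change ⟪R (p.1 + p.2), q.1 + q.2⟫ = ⟪p.1 + p.2, R (q.1 + q.2)⟫
  rw [hRx, hRy, inner_add_right, inner_add_left, hA hp q hq]

/-- The resolvent identity: `(z + 1)⁻¹ - R` is inverted by `(z + 1) + (z + 1)² (A - z)⁻¹`. -/
theorem IsResolventAtOne.inv_add_one_notMem_spectrum {A : Set (K × K)} {R : K →L[ℂ] K}
    (hR : IsResolventAtOne A R) {z : ℂ} (hz : z ∈ GraphResolventSet A) (hz1 : z + 1 ≠ 0) :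
    (z + 1)⁻¹ ∉ spectrum ℂ R := by
  obtain ⟨Rz, hRz, hsurj⟩ := hz
  set B : K →L[ℂ] K := (z + 1) • 1 + (z + 1) ^ 2 • Rz
  have hinv : (z + 1)⁻¹ * (z + 1) = 1 := inv_mul_cancel₀ hz1
  have hsub : ∀ y, (algebraMap ℂ (K →L[ℂ] K) (z + 1)⁻¹ - R) y = (z + 1)⁻¹ • y - R y := by
    intro y
    simp [Algebra.algebraMap_eq_smul_one]
  rw [spectrum.notMem_iff]
  refine ⟨⟨_, B, ext fun y => ?_, ext fun y => ?_⟩, rfl⟩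
  · obtain ⟨p, hp, rfl⟩ := hsurj y
    have hB : B (p.2 - z • p.1) = (z + 1) • (p.1 + p.2) := by
      simp only [B, add_apply, smul_apply, one_apply_eq_self, hRz p hp]
      match_scalars <;> ring
    rw [mul_apply_eq_comp, hB, hsub, map_smul, hR.1 p hp, smul_smul, hinv, one_apply_eq_self]
    module
  · obtain ⟨p, hp, rfl, hRy⟩ := hR.exists_mem y
    have hy : (algebraMap ℂ (K →L[ℂ] K) (z + 1)⁻¹ - R) (p.1 + p.2)
        = (z + 1)⁻¹ • (p.2 - z • p.1) := by
      rw [hsub, hRy]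
      match_scalars <;> grind
    rw [mul_apply_eq_comp, hy, map_smul]
    simp only [B, add_apply, smul_apply, one_apply_eq_self, hRz p hp]
    match_scalars <;> grind

theorem IsResolventAtOne.spectrum_subset_Icc {A : Set (K × K)} {R : K →L[ℂ] K}
    (hR : IsResolventAtOne A R) (hneg : ∀ μ : ℝ, μ < 0 → (μ : ℂ) ∈ GraphResolventSet A) :
    spectrum ℝ R ⊆ Set.Icc 0 1 := by
  intro t ht
  by_contra hout
  have ht0 : t ≠ 0 := by
    rintro rfl
    exact hout ⟨le_rfl, zero_le_one⟩
  have hν : t⁻¹ - 1 < 0 := by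
    rcases ht0.lt_or_gt with h | h
    · linarith [inv_lt_zero.mpr h]
    · have h1 : 1 < t := by
        by_contra! h'
        exact hout ⟨h.le, h'⟩
      linarith [inv_lt_one_of_one_lt₀ h1]
  have hz : ((t⁻¹ - 1 : ℝ) : ℂ) + 1 = (t : ℂ)⁻¹ := by push_cast; ring
  refine hR.inv_add_one_notMem_spectrum (hneg _ hν) (by simpa [hz] using ht0) ?_
  rw [hz, inv_inv]
  exact spectrum.algebraMap_mem ℂ ht

theorem IsSelfAdjoint.sub_mul_self_nonneg {A : Type*} [CStarAlgebra A] [PartialOrder A]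
    [StarOrderedRing A] {a : A} (ha : IsSelfAdjoint a) (hspec : spectrum ℝ a ⊆ Set.Icc 0 1) :
    0 ≤ a - a * a := by
  have hcfc : cfc (fun x : ℝ => x - x * x) a = a - a * a := by
    rw [cfc_sub _ _ a, cfc_mul _ _ a, cfc_id' ℝ a]
  rw [← hcfc]
  refine cfc_nonneg fun x hx => ?_
  obtain ⟨h0, h1⟩ := hspec hx
  nlinarith

theorem IsResolventAtOne.mk_zero_mem_of_inner_eq_zero [CompleteSpace K] {A : Set (K × K)}
    {R : K →L[ℂ] K} (hR : IsResolventAtOne A R) (hsa : IsSelfAdjoint R) (hpos : 0 ≤ R - R * R)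
    {φ f : K} (hp : (φ, f) ∈ A) (hφf : ⟪φ, f⟫ = 0) : (φ, 0) ∈ A := by
  have hRy : R (φ + f) = φ := hR.1 _ hp
  have hinner : ⟪φ + f, (R - R * R) (φ + f)⟫ = 0 := by
    have hsym : ⟪R (φ + f), φ⟫ = ⟪φ + f, R φ⟫ := hsa.isSymmetric _ _
    rw [sub_apply, mul_apply_eq_comp, hRy, inner_sub_right, ← hsym, hRy, inner_add_left,
      ← inner_conj_symm f, hφf, map_zero, add_zero, sub_self]
  have hfix : R φ = φ := by
    have h := apply_eq_zero_of_nonneg_of_inner_eq_zero hpos hinner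
    rw [sub_apply, mul_apply_eq_comp, hRy, sub_eq_zero] at h
    exact h.symm
  obtain ⟨q, hq, hqφ, hRq⟩ := hR.exists_mem φ
  have hq1 : q.1 = φ := hRq.symm.trans hfix
  have hq2 : q.2 = 0 := by
    rw [hq1] at hqφ
    exact add_eq_left.mp hqφ
  rwa [← hq1, ← hq2]

theorem mk_zero_mem_of_inner_eq_zero [CompleteSpace K] {A : Set (K × K)}
    (hA : A ⊆ AdjointGraph A) (hneg : ∀ μ : ℝ, μ < 0 → (μ : ℂ) ∉ GraphSpectrum A)
    {φ f : K} (hp : (φ, f) ∈ A) (hφf : ⟪φ, f⟫ = 0) : (φ, 0) ∈ A := by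
  have hres : ∀ μ : ℝ, μ < 0 → (μ : ℂ) ∈ GraphResolventSet A :=
    fun μ hμ => Set.notMem_compl_iff.mp (hneg μ hμ)
  obtain ⟨R, hR⟩ := exists_isResolventAtOne_of_neg_one_mem (by simpa using hres (-1) (by norm_num))
  have hsa : IsSelfAdjoint R := hR.isSelfAdjoint hA
  exact hR.mk_zero_mem_of_inner_eq_zero hsa (hsa.sub_mul_self_nonneg (hR.spectrum_subset_Icc hres))
    hp hφf

end Graphs

theorem IsElliptic.exists_norm_le {V H : Type*} [NormedAddCommGroup V] [NormedAddCommGroup H]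
    {a : V → V → ℂ} {i : V → H} (ha : IsElliptic a i) (c : ℝ) :
    ∃ C : ℝ≥0, ∀ u, (a u u).re ≤ c * ‖i u‖ ^ 2 → ‖u‖ ≤ C * ‖i u‖ := by
  obtain ⟨ω, μ, hω, hμ, hell⟩ := ha
  refine ⟨Real.toNNReal (Real.sqrt ((|c| + ω) / μ)), fun u hu => ?_⟩
  have hsq : ‖u‖ ^ 2 ≤ (|c| + ω) / μ * ‖i u‖ ^ 2 := by
    rw [div_mul_eq_mul_div, le_div_iff₀ hμ]
    nlinarith [hell u, le_abs_self c, sq_nonneg ‖i u‖]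
  rw [Real.coe_toNNReal _ (Real.sqrt_nonneg _), ← Real.sqrt_sq (norm_nonneg (i u)),
    ← Real.sqrt_mul (by positivity), Real.le_sqrt (norm_nonneg u) (by positivity)]
  exact hsq

section Forms

variable {V H K : Type*} [NormedAddCommGroup V] [InnerProductSpace ℂ V]
  [NormedAddCommGroup H] [InnerProductSpace ℂ H] [NormedAddCommGroup K] [InnerProductSpace ℂ K]

theorem IsSesqui.sub_mul_inner {a : V → V → ℂ} (ha : IsSesqui a) (i : V →L[ℂ] H) (c : ℂ) :
    IsSesqui fun u v => a u v - c * ⟪i v, i u⟫ := by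
  obtain ⟨hadd₁, hadd₂, hsmul₁, hsmul₂⟩ := ha
  refine ⟨fun u₁ u₂ v => ?_, fun u v₁ v₂ => ?_, fun d u v => ?_, fun d u v => ?_⟩
  · simp only [hadd₁, map_add, inner_add_right]; ring
  · simp only [hadd₂, map_add, inner_add_left]; ring
  · simp only [hsmul₁, map_smul, inner_smul_right]; ring
  · simp only [hsmul₂, map_smul, inner_smul_left]; ring

theorem IsSymmForm.sub_mul_inner {a : V → V → ℂ} (ha : IsSymmForm a) (i : V →L[ℂ] H) (c : ℝ) :
    IsSymmForm fun u v => a u v - (c : ℂ) * ⟪i v, i u⟫ := by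
  intro u v
  simp only [map_sub, map_mul, conj_ofReal, inner_conj_symm, ha u v]

theorem graphOf_subset_adjointGraph {b : V → V → ℂ} (hb : IsSymmForm b) (j : V →L[ℂ] K) :
    GraphOf b j ⊆ AdjointGraph (GraphOf b j) := by
  rintro ⟨_, f⟩ ⟨u, rfl, hu⟩ ⟨_, g⟩ ⟨w, rfl, hw⟩
  change ⟪j u, g⟫ = ⟪f, j w⟫
  rw [← hw u, hb u w, hu w, inner_conj_symm]

def IsSesqui.leftKer {b : V → V → ℂ} (hb : IsSesqui b) : Submodule ℂ V :=
  LinearMap.ker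
    ({ toFun := b, map_add' := fun u w => funext (hb.1 u w),
       map_smul' := fun c u => funext (hb.2.2.1 c u) } : V →ₗ[ℂ] V → ℂ)

theorem IsSesqui.mem_leftKer {b : V → V → ℂ} (hb : IsSesqui b) {u : V} :
    u ∈ hb.leftKer ↔ ∀ v, b u v = 0 := by
  simp [leftKer, funext_iff]

theorem IsSesqui.mem_map_leftKer_of_mk_zero_mem {b : V → V → ℂ} (hb : IsSesqui b)
    (j : V →L[ℂ] K) {φ : K} (h : (φ, 0) ∈ GraphOf b j) : φ ∈ hb.leftKer.map (j : V →ₗ[ℂ] K) := by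
  obtain ⟨u, rfl, hu⟩ := h
  exact ⟨u, hb.mem_leftKer.mpr fun v => by simpa using hu v, rfl⟩

theorem IsSesqui.finiteDimensional_leftKer_sub_mul_inner {a : V → V → ℂ} (ha : IsSesqui a)
    {i : V →L[ℂ] H} (hell : IsElliptic a i) (hi : IsCompactOperator i) (c : ℝ) :
    FiniteDimensional ℂ (ha.sub_mul_inner i c).leftKer := by
  obtain ⟨C, hC⟩ := hell.exists_norm_le c
  refine Submodule.finiteDimensional_of_isCompactOperator_of_norm_le hi _ fun u hu => hC u ?_
  have hu := sub_eq_zero.mp (((ha.sub_mul_inner i c).mem_leftKer.mp hu) u)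
  rw [hu, re_ofReal_mul, ← inner_self_eq_norm_sq (𝕜 := ℂ)]
  rfl

end Forms

theorem statement6_general
    {V H K : Type*}
    [NormedAddCommGroup V] [InnerProductSpace ℂ V]
    [NormedAddCommGroup H] [InnerProductSpace ℂ H]
    [NormedAddCommGroup K] [InnerProductSpace ℂ K] [CompleteSpace K]
    (i : V →L[ℂ] H) (hicpt : IsCompactOperator ⇑i)
    (j : V →L[ℂ] K)
    (a : V → V → ℂ)
    (hsesq : IsSesqui a) (hsymm : IsSymmForm a)
    (hell : IsElliptic a ⇑i)
    (lam : ℝ)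
    (hinf : InfiniteNullSpan
      (GraphOf (fun u v => a u v - (lam : ℂ) * @inner ℂ _ _ (i v) (i u)) j)) :
    ∃ μ : ℝ, μ < 0 ∧ (μ : ℂ) ∈ GraphSpectrum
      (GraphOf (fun u v => a u v - (lam : ℂ) * @inner ℂ _ _ (i v) (i u)) j) := by
  by_contra! hneg
  have hb := hsesq.sub_mul_inner i lam
  have := hsesq.finiteDimensional_leftKer_sub_mul_inner hell hicpt lam
  refine hinf (Submodule.finiteDimensional_of_le (S₂ := hb.leftKer.map (j : V →ₗ[ℂ] K)) ?_)
  refine Submodule.span_le.mpr fun φ ⟨f, ⟨hp, _⟩, hφf⟩ => hb.mem_map_leftKer_of_mk_zero_mem j ?_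
  exact mk_zero_mem_of_inner_eq_zero
    (graphOf_subset_adjointGraph (hsymm.sub_mul_inner i lam) j) hneg hp hφf

/-- Lemma 2.7.
With `V`, `H`, `K` Hilbert spaces, `i : V → H` a compact injective embedding, `j : V → K`
compact and `a` a positive symmetric continuous `i`-elliptic form:  let `λ > 0`, let `N_λ`
be the self-adjoint graph associated with `(b_λ, j)` where `b_λ(u,v) = a(u,v) - λ (u,v)_H`,
and assume that the span of `{φ ∈ D(N_λ) : (N_λ° φ, φ)_K = 0}` is infinite dimensional.
Then `σ(N_λ) ∩ (-∞, 0) ≠ ∅`. -/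
theorem statement6
    {V H K : Type*}
    [NormedAddCommGroup V] [InnerProductSpace ℂ V] [CompleteSpace V]
    [NormedAddCommGroup H] [InnerProductSpace ℂ H] [CompleteSpace H]
    [NormedAddCommGroup K] [InnerProductSpace ℂ K] [CompleteSpace K]
    (i : V →L[ℂ] H) (hinj : Function.Injective ⇑i) (hicpt : IsCompactOperator ⇑i)
    (j : V →L[ℂ] K) (hjcpt : IsCompactOperator ⇑j)
    (a : V → V → ℂ)
    (hsesq : IsSesqui a) (hpos : IsPositiveForm a) (hsymm : IsSymmForm a)
    (hcont : IsContinuousForm a) (hell : IsElliptic a ⇑i)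
    (lam : ℝ) (hlam : 0 < lam)
    (hinf : InfiniteNullSpan
      (GraphOf (fun u v => a u v - (lam : ℂ) * @inner ℂ _ _ (i v) (i u)) j)) :
    ∃ μ : ℝ, μ < 0 ∧ (μ : ℂ) ∈ GraphSpectrum
      (GraphOf (fun u v => a u v - (lam : ℂ) * @inner ℂ _ _ (i v) (i u)) j) :=
  statement6_general i hicpt j a hsesq hsymm hell lam hinf
end
end
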